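/- Let V be a complex Banach space, p ∈ ℕ, and let A : ℝ → Matrix (Fin p) (Fin p) ℂ be bounded and continuous with every entry almost automorphic, upper triangular (a_{ij}(t) = 0 for all t whenever i > j), and such that for each i the function t ↦ Re(a_{ii}(t)) is ergodic with nonzero mean. Let f : ℝ → (Fin p → V) be bounded, continuous and almost automorphic. Then every bounded differentiable solution y : ℝ → (Fin p → V) of the system y_i'(t) = Σ_j a_{ij}(t)·y_j(t) + f_i(t), i = 1,…,p, is almost automorphic. -/

import Mathlib

/-!
Solve the rows from the bottom up: row `i` is the scalar equation `yᵢ' = aᵢᵢ yᵢ + gᵢ`, whose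
forcing term `gᵢ = ∑_{j > i} aᵢⱼ yⱼ + fᵢ` is almost automorphic by induction.

For a scalar equation `x' = a x + g` whose `Re a` has a negative ergodic mean, long windows
give a uniform bound `∫ᵤᵗ Re a ≤ K - c (t - u)` with `c > 0`. Hence the only bounded solution is
`x t = ∫_{-∞}^t exp (∫ᵤᵗ a) g u du`, and translating `a` and `g` along a subsequence and passing to
the limit under the integral (dominated convergence) shows that `x` is almost automorphic.
A positive mean becomes a negative one after reversing time.
-/

open MeasureTheory Filter Topology

attribute [local instance] Matrix.linftyOpNormedAddCommGroup Matrix.linftyOpNormedRing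
  Matrix.linftyOpNormedAlgebra

/-- A continuous function `ψ : ℝ → V` into a Banach space is almost automorphic if for every
sequence of reals there is a subsequence `(τₙ)` and a function `ψ̃` with
`ψ(t+τₙ) → ψ̃(t)` and `ψ̃(t−τₙ) → ψ(t)` pointwise on `ℝ`. -/
def AlmostAutomorphic {V : Type*} [NormedAddCommGroup V] (ψ : ℝ → V) : Prop :=
  Continuous ψ ∧ ∀ σ : ℕ → ℝ, ∃ k : ℕ → ℕ, StrictMono k ∧ ∃ ψt : ℝ → V,
    (∀ t : ℝ, Tendsto (fun n => ψ (t + σ (k n))) atTop (𝓝 (ψt t))) ∧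
    (∀ t : ℝ, Tendsto (fun n => ψt (t - σ (k n))) atTop (𝓝 (ψ t)))

/-- A bounded continuous function `f : ℝ → ℝ` is ergodic with mean `M` if
`(1/(2T)) ∫_{−T+ξ}^{T+ξ} f(s) ds → M` as `T → ∞`, uniformly with respect to `ξ ∈ ℝ`. -/
def ErgodicMeanR (f : ℝ → ℝ) (M : ℝ) : Prop :=
  ∀ ε > 0, ∃ T₁ > (0 : ℝ), ∀ T ≥ T₁, ∀ ξ : ℝ,
    |(2 * T)⁻¹ * (∫ s in (-T + ξ)..(T + ξ), f s) - M| < ε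

open Set

section Automorphy

variable {V W : Type*} [NormedAddCommGroup V] [NormedAddCommGroup W]

def HasAutomorphicLimit (ψ : ℝ → V) (σ : ℕ → ℝ) : Prop :=
  ∃ ψt : ℝ → V, (∀ t, Tendsto (fun n => ψ (t + σ n)) atTop (𝓝 (ψt t))) ∧
    ∀ t, Tendsto (fun n => ψt (t - σ n)) atTop (𝓝 (ψ t))

namespace HasAutomorphicLimit

variable {ψ φ : ℝ → V} {σ : ℕ → ℝ}

theorem comp_strictMono (h : HasAutomorphicLimit ψ σ) {k : ℕ → ℕ} (hk : StrictMono k) :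
    HasAutomorphicLimit ψ (σ ∘ k) :=
  let ⟨ψt, h₁, h₂⟩ := h
  ⟨ψt, fun t => (h₁ t).comp hk.tendsto_atTop, fun t => (h₂ t).comp hk.tendsto_atTop⟩

theorem add (hψ : HasAutomorphicLimit ψ σ) (hφ : HasAutomorphicLimit φ σ) :
    HasAutomorphicLimit (fun t => ψ t + φ t) σ :=
  let ⟨ψt, hψ₁, hψ₂⟩ := hψ
  let ⟨φt, hφ₁, hφ₂⟩ := hφ
  ⟨fun t => ψt t + φt t, fun t => (hψ₁ t).add (hφ₁ t), fun t => (hψ₂ t).add (hφ₂ t)⟩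

theorem neg (h : HasAutomorphicLimit ψ σ) : HasAutomorphicLimit (fun t => -ψ t) σ :=
  let ⟨ψt, h₁, h₂⟩ := h
  ⟨fun t => -ψt t, fun t => (h₁ t).neg, fun t => (h₂ t).neg⟩

theorem smul [NormedSpace ℂ V] {c : ℝ → ℂ} (hc : HasAutomorphicLimit c σ)
    (hψ : HasAutomorphicLimit ψ σ) : HasAutomorphicLimit (fun t => c t • ψ t) σ :=
  let ⟨ct, hc₁, hc₂⟩ := hc
  let ⟨ψt, hψ₁, hψ₂⟩ := hψ
  ⟨fun t => ct t • ψt t, fun t => (hc₁ t).smul (hψ₁ t), fun t => (hc₂ t).smul (hψ₂ t)⟩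

theorem comp_neg (h : HasAutomorphicLimit ψ (-σ)) : HasAutomorphicLimit (fun t => ψ (-t)) σ := by
  obtain ⟨ψt, h₁, h₂⟩ := h
  refine ⟨fun t => ψt (-t), fun t => ?_, fun t => ?_⟩
  · simpa [neg_add, sub_eq_add_neg] using h₁ (-t) |>.congr fun n => by rw [add_comm, Pi.neg_apply]
  · simpa [sub_eq_add_neg, add_comm] using h₂ (-t)

theorem apply {ι : Type*} [Fintype ι] {ψ : ℝ → ι → V} (h : HasAutomorphicLimit ψ σ) (i : ι) :
    HasAutomorphicLimit (fun t => ψ t i) σ :=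
  let ⟨ψt, h₁, h₂⟩ := h
  ⟨fun t => ψt t i, fun t => tendsto_pi_nhds.1 (h₁ t) i, fun t => tendsto_pi_nhds.1 (h₂ t) i⟩

theorem pi {ι : Type*} [Fintype ι] {ψ : ℝ → ι → V}
    (h : ∀ i, HasAutomorphicLimit (fun t => ψ t i) σ) : HasAutomorphicLimit ψ σ := by
  choose ψt h₁ h₂ using h
  exact ⟨fun t i => ψt i t, fun t => tendsto_pi_nhds.2 fun i => h₁ i t,
    fun t => tendsto_pi_nhds.2 fun i => h₂ i t⟩

end HasAutomorphicLimit

namespace AlmostAutomorphic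

variable {ψ φ : ℝ → V}

theorem exists_hasAutomorphicLimit (h : AlmostAutomorphic ψ) (σ : ℕ → ℝ) :
    ∃ k : ℕ → ℕ, StrictMono k ∧ HasAutomorphicLimit ψ (σ ∘ k) :=
  h.2 σ

theorem exists_hasAutomorphicLimit_pair (hψ : AlmostAutomorphic ψ) {φ : ℝ → W}
    (hφ : AlmostAutomorphic φ) (σ : ℕ → ℝ) :
    ∃ k : ℕ → ℕ, StrictMono k ∧
      HasAutomorphicLimit ψ (σ ∘ k) ∧ HasAutomorphicLimit φ (σ ∘ k) := by
  obtain ⟨k₁, hk₁, h₁⟩ := hψ.exists_hasAutomorphicLimit σ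
  obtain ⟨k₂, hk₂, h₂⟩ := hφ.exists_hasAutomorphicLimit (σ ∘ k₁)
  exact ⟨k₁ ∘ k₂, hk₁.comp hk₂, h₁.comp_strictMono hk₂, h₂⟩

theorem exists_hasAutomorphicLimit_finset {ι : Type*} {ψ : ι → ℝ → V} (s : Finset ι)
    (h : ∀ i ∈ s, AlmostAutomorphic (ψ i)) (σ : ℕ → ℝ) :
    ∃ k : ℕ → ℕ, StrictMono k ∧ ∀ i ∈ s, HasAutomorphicLimit (ψ i) (σ ∘ k) := by
  classical
  induction s using Finset.induction_on with
  | empty => exact ⟨id, strictMono_id, by simp⟩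
  | insert a s _ ih =>
    obtain ⟨k₁, hk₁, h₁⟩ := ih fun i hi => h i (Finset.mem_insert_of_mem hi)
    obtain ⟨k₂, hk₂, h₂⟩ := (h a (Finset.mem_insert_self a s)).exists_hasAutomorphicLimit (σ ∘ k₁)
    refine ⟨k₁ ∘ k₂, hk₁.comp hk₂, fun i hi => ?_⟩
    rcases Finset.mem_insert.1 hi with rfl | hi
    · exact h₂
    · exact (h₁ i hi).comp_strictMono hk₂

theorem const (v : V) : AlmostAutomorphic fun _ : ℝ => v :=
  ⟨continuous_const, fun _ => ⟨id, strictMono_id, fun _ => v,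
    fun _ => tendsto_const_nhds, fun _ => tendsto_const_nhds⟩⟩

theorem add (hψ : AlmostAutomorphic ψ) (hφ : AlmostAutomorphic φ) :
    AlmostAutomorphic fun t => ψ t + φ t := by
  refine ⟨hψ.1.add hφ.1, fun σ => ?_⟩
  obtain ⟨k, hk, h₁, h₂⟩ := hψ.exists_hasAutomorphicLimit_pair hφ σ
  exact ⟨k, hk, h₁.add h₂⟩

theorem neg (h : AlmostAutomorphic ψ) : AlmostAutomorphic fun t => -ψ t :=
  ⟨h.1.neg, fun σ => let ⟨k, hk, hl⟩ := h.exists_hasAutomorphicLimit σ; ⟨k, hk, hl.neg⟩⟩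

theorem smul [NormedSpace ℂ V] {c : ℝ → ℂ} (hc : AlmostAutomorphic c)
    (hψ : AlmostAutomorphic ψ) : AlmostAutomorphic fun t => c t • ψ t := by
  refine ⟨hc.1.smul hψ.1, fun σ => ?_⟩
  obtain ⟨k, hk, h₁, h₂⟩ := hc.exists_hasAutomorphicLimit_pair hψ σ
  exact ⟨k, hk, h₁.smul h₂⟩

theorem finset_sum {ι : Type*} {ψ : ι → ℝ → V} (s : Finset ι)
    (h : ∀ i ∈ s, AlmostAutomorphic (ψ i)) : AlmostAutomorphic fun t => ∑ i ∈ s, ψ i t := by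
  classical
  induction s using Finset.induction_on with
  | empty => simpa using const (0 : V)
  | insert a s ha ih =>
    simp only [Finset.sum_insert ha]
    exact (h a (Finset.mem_insert_self a s)).add
      (ih fun i hi => h i (Finset.mem_insert_of_mem hi))

theorem comp_neg (h : AlmostAutomorphic ψ) : AlmostAutomorphic fun t => ψ (-t) :=
  ⟨h.1.comp continuous_neg, fun σ =>
    let ⟨k, hk, hl⟩ := h.exists_hasAutomorphicLimit (-σ); ⟨k, hk, HasAutomorphicLimit.comp_neg hl⟩⟩

theorem apply {ι : Type*} [Fintype ι] {ψ : ℝ → ι → V} (h : AlmostAutomorphic ψ) (i : ι) :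
    AlmostAutomorphic fun t => ψ t i :=
  ⟨(continuous_apply i).comp h.1, fun σ =>
    let ⟨k, hk, hl⟩ := h.exists_hasAutomorphicLimit σ; ⟨k, hk, hl.apply i⟩⟩

theorem pi {ι : Type*} [Fintype ι] {ψ : ℝ → ι → V}
    (h : ∀ i, AlmostAutomorphic fun t => ψ t i) : AlmostAutomorphic ψ := by
  refine ⟨continuous_pi fun i => (h i).1, fun σ => ?_⟩
  obtain ⟨k, hk, hl⟩ :=
    exists_hasAutomorphicLimit_finset (ψ := fun i t => ψ t i) Finset.univ (fun i _ => h i) σ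
  exact ⟨k, hk, HasAutomorphicLimit.pi fun i => hl i (Finset.mem_univ i)⟩

end AlmostAutomorphic

end Automorphy

namespace ErgodicMeanR

variable {b : ℝ → ℝ} {m : ℝ}

theorem exists_integral_le (hb : ErgodicMeanR b m) {C : ℝ} (hC : ∀ t, |b t| ≤ C) {c : ℝ}
    (hc : c < -m) :
    ∃ K, ∀ u t, u ≤ t → ∫ s in u..t, b s ≤ K - c * (t - u) := by
  obtain ⟨T₁, hT₁, hT⟩ := hb (-m - c) (by linarith)
  refine ⟨|C + c| * (2 * T₁), fun u t hut => ?_⟩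
  have hK : 0 ≤ |C + c| * (2 * T₁) := by positivity
  rcases le_or_gt (2 * T₁) (t - u) with hlong | hshort
  · -- centre the window at the midpoint of `[u, t]`
    have h := abs_lt.1 (hT ((t - u) / 2) (by linarith) ((u + t) / 2))
    rw [show -((t - u) / 2) + (u + t) / 2 = u by ring, show (t - u) / 2 + (u + t) / 2 = t by ring,
      show 2 * ((t - u) / 2) = t - u by ring] at h
    have hpos : 0 < t - u := by linarith
    have : (t - u)⁻¹ * ∫ s in u..t, b s < -c := by linarith [h.2]
    rw [inv_mul_lt_iff₀ hpos] at this
    linarith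
  · have h := intervalIntegral.norm_integral_le_of_norm_le_const (a := u) (b := t)
      fun s _ => (Real.norm_eq_abs (b s)).trans_le (hC s)
    rw [abs_of_nonneg (sub_nonneg.2 hut), Real.norm_eq_abs] at h
    have : (C + c) * (t - u) ≤ |C + c| * (2 * T₁) :=
      (mul_le_mul_of_nonneg_right (le_abs_self _) (sub_nonneg.2 hut)).trans
        (mul_le_mul_of_nonneg_left hshort.le (abs_nonneg _))
    linarith [(abs_le.1 h).2]

theorem neg_comp_neg (h : ErgodicMeanR b m) : ErgodicMeanR (fun t => -b (-t)) (-m) := by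
  intro ε hε
  obtain ⟨T₁, hT₁, hT⟩ := h ε hε
  refine ⟨T₁, hT₁, fun T hT' ξ => ?_⟩
  have hint : ∫ s in (-T + ξ)..(T + ξ), -b (-s) = -∫ s in (-T + -ξ)..(T + -ξ), b s := by
    rw [intervalIntegral.integral_neg, intervalIntegral.integral_comp_neg (f := b)]
    congr 2 <;> ring
  rw [hint, ← abs_neg]
  convert hT T hT' (-ξ) using 2
  ring

end ErgodicMeanR

theorem intervalIntegrable_of_norm_le {E : Type*} [NormedAddCommGroup E] {f : ℝ → E}
    (hf : AEStronglyMeasurable f) {C : ℝ} (hC : ∀ s, ‖f s‖ ≤ C) (u t : ℝ) :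
    IntervalIntegrable f volume u t :=
  (intervalIntegrable_const (c := C)).mono_fun' hf.restrict (ae_of_all _ hC)

theorem tendsto_intervalIntegral_of_tendsto {E : Type*} [NormedAddCommGroup E] [NormedSpace ℝ E]
    {F : ℕ → ℝ → E} {f : ℝ → E} (hF : ∀ n, AEStronglyMeasurable (F n)) {C : ℝ}
    (hC : ∀ n s, ‖F n s‖ ≤ C) (hf : ∀ s, Tendsto (fun n => F n s) atTop (𝓝 (f s))) (u t : ℝ) :
    Tendsto (fun n => ∫ s in u..t, F n s) atTop (𝓝 (∫ s in u..t, f s)) :=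
  intervalIntegral.tendsto_integral_filter_of_dominated_convergence (fun _ => C)
    (Eventually.of_forall fun n => (hF n).restrict)
    (Eventually.of_forall fun n => ae_of_all _ fun s _ => hC n s) intervalIntegrable_const
    (ae_of_all _ fun s _ => hf s)

theorem continuous_intervalIntegral_left {E : Type*} [NormedAddCommGroup E] [NormedSpace ℝ E]
    {f : ℝ → E} (hf : ∀ u t, IntervalIntegrable f volume u t) (t : ℝ) :
    Continuous fun u => ∫ r in u..t, f r :=
  (intervalIntegral.continuous_primitive hf t).neg.congr fun u =>
    (intervalIntegral.integral_symm t u).symm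

theorem integrableOn_exp_sub_mul_Iic {c : ℝ} (hc : 0 < c) (K C t : ℝ) :
    IntegrableOn (fun u => Real.exp (K - c * (t - u)) * C) (Iic t) := by
  have h_eq : (fun u => Real.exp (K - c * (t - u)) * C)
      = fun u => Real.exp (K - c * t) * C * Real.exp (c * u) := by
    funext u
    rw [mul_right_comm, ← Real.exp_add]
    ring_nf
  rw [h_eq]
  exact (integrableOn_exp_mul_Iic hc t).const_mul _

/-- Solutions of `x' = a x` decay uniformly: `‖x t‖ ≤ e^K e^{-c (t - u)} ‖x u‖` for `u ≤ t`. -/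
def ExpStable (a : ℝ → ℂ) (K c : ℝ) : Prop :=
  ∀ u t, u ≤ t → ∫ s in u..t, (a s).re ≤ K - c * (t - u)

theorem ErgodicMeanR.exists_expStable {a : ℝ → ℂ} {C : ℝ} (hC : ∀ t, ‖a t‖ ≤ C) {m : ℝ}
    (herg : ErgodicMeanR (fun t => (a t).re) m) (hm : m < 0) : ∃ K, ExpStable a K (-m / 2) :=
  herg.exists_integral_le (fun t => (Complex.abs_re_le_norm _).trans (hC t)) (by linarith)

namespace ExpStable

variable {a : ℝ → ℂ} {K c : ℝ}

theorem comp_add_const (h : ExpStable a K c) (τ : ℝ) : ExpStable (fun s => a (s + τ)) K c := by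
  intro u t hut
  rw [intervalIntegral.integral_comp_add_right (fun s => (a s).re)]
  simpa using h (u + τ) (t + τ) (by linarith)

theorem of_tendsto {as : ℕ → ℝ → ℂ} (hmeas : ∀ n, AEStronglyMeasurable (as n)) {C : ℝ}
    (hC : ∀ n s, ‖as n s‖ ≤ C) (h : ∀ n, ExpStable (as n) K c)
    (ha : ∀ s, Tendsto (fun n => as n s) atTop (𝓝 (a s))) : ExpStable a K c := fun u t hut =>
  le_of_tendsto'
    (tendsto_intervalIntegral_of_tendsto
      (fun n => Complex.continuous_re.comp_aestronglyMeasurable (hmeas n))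
      (fun n s => (Complex.abs_re_le_norm _).trans (hC n s))
      (fun s => (Complex.continuous_re.tendsto _).comp (ha s)) u t)
    fun n => h n u t hut

theorem norm_cexp_integral_smul_le {V : Type*} [NormedAddCommGroup V] [NormedSpace ℂ V]
    (h : ExpStable a K c) {u t : ℝ} (ha : IntervalIntegrable a volume u t) (hut : u ≤ t)
    {x : V} {C : ℝ} (hx : ‖x‖ ≤ C) :
    ‖Complex.exp (∫ r in u..t, a r) • x‖ ≤ Real.exp (K - c * (t - u)) * C := by
  rw [norm_smul, Complex.norm_exp]
  refine mul_le_mul (Real.exp_le_exp.2 ?_) hx (norm_nonneg _) (Real.exp_pos _).le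
  have := intervalIntegral.intervalIntegral_re (𝕜 := ℂ) ha
  simp only [RCLike.re_to_complex] at this
  exact this ▸ h u t hut

end ExpStable

section BoundedSolution

variable {V : Type*} [NormedAddCommGroup V] [NormedSpace ℂ V]

noncomputable def boundedSolution (a : ℝ → ℂ) (g : ℝ → V) (t : ℝ) : V :=
  ∫ u in Iic t, Complex.exp (∫ r in u..t, a r) • g u

theorem boundedSolution_comp_add_const (a : ℝ → ℂ) (g : ℝ → V) (τ t : ℝ) :
    boundedSolution (fun s => a (s + τ)) (fun s => g (s + τ)) t = boundedSolution a g (t + τ) := by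
  have := (measurePreserving_add_right volume τ).setIntegral_preimage_emb
    (measurableEmbedding_addRight τ) (fun u => Complex.exp (∫ r in u..t + τ, a r) • g u)
    (Iic (t + τ))
  rw [preimage_add_const_Iic, add_sub_cancel_right] at this
  rw [boundedSolution, boundedSolution, ← this]
  refine setIntegral_congr_fun measurableSet_Iic fun u _ => ?_
  rw [intervalIntegral.integral_comp_add_right (fun r => a r)]

theorem tendsto_boundedSolution {as : ℕ → ℝ → ℂ} {a : ℝ → ℂ} {gs : ℕ → ℝ → V} {g : ℝ → V}
    (has : ∀ n, AEStronglyMeasurable (as n)) {Ca : ℝ} (hCa : ∀ n s, ‖as n s‖ ≤ Ca)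
    {K c : ℝ} (hstab : ∀ n, ExpStable (as n) K c) (hc : 0 < c)
    (hgs : ∀ n, AEStronglyMeasurable (gs n)) {Cg : ℝ} (hCg : ∀ n s, ‖gs n s‖ ≤ Cg)
    (ha : ∀ s, Tendsto (fun n => as n s) atTop (𝓝 (a s)))
    (hg : ∀ s, Tendsto (fun n => gs n s) atTop (𝓝 (g s))) (t : ℝ) :
    Tendsto (fun n => boundedSolution (as n) (gs n) t) atTop (𝓝 (boundedSolution a g t)) := by
  have hint n := intervalIntegrable_of_norm_le (has n) (hCa n)
  refine tendsto_integral_of_dominated_convergence (fun u => Real.exp (K - c * (t - u)) * Cg)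
    (fun n => ((Complex.continuous_exp.comp
      (continuous_intervalIntegral_left (hint n) t)).aestronglyMeasurable.smul (hgs n)).restrict)
    (integrableOn_exp_sub_mul_Iic hc K Cg t) (fun n => ?_)
    (ae_of_all _ fun u => ((Complex.continuous_exp.tendsto _).comp
      (tendsto_intervalIntegral_of_tendsto has hCa ha u t)).smul (hg u))
  rw [ae_restrict_iff' measurableSet_Iic]
  exact ae_of_all _ fun u hu => (hstab n).norm_cexp_integral_smul_le (hint n u t) hu (hCg n u)

theorem tendsto_boundedSolution_add {a a' : ℝ → ℂ} {g g' : ℝ → V} (ha : StronglyMeasurable a)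
    {Ca : ℝ} (hCa : ∀ s, ‖a s‖ ≤ Ca) {K c : ℝ} (hstab : ExpStable a K c) (hc : 0 < c)
    (hg : StronglyMeasurable g) {Cg : ℝ} (hCg : ∀ s, ‖g s‖ ≤ Cg) {τ : ℕ → ℝ}
    (ha' : ∀ s, Tendsto (fun n => a (s + τ n)) atTop (𝓝 (a' s)))
    (hg' : ∀ s, Tendsto (fun n => g (s + τ n)) atTop (𝓝 (g' s))) (t : ℝ) :
    Tendsto (fun n => boundedSolution a g (t + τ n)) atTop (𝓝 (boundedSolution a' g' t)) := by
  simp_rw [← boundedSolution_comp_add_const]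
  exact tendsto_boundedSolution
    (fun n => (ha.comp_measurable (measurable_add_const (τ n))).aestronglyMeasurable)
    (fun n s => hCa _) (fun n => hstab.comp_add_const (τ n)) hc
    (fun n => (hg.comp_measurable (measurable_add_const (τ n))).aestronglyMeasurable)
    (fun n s => hCg _) ha' hg' t

variable [CompleteSpace V]

theorem integral_cexp_integral_smul_eq {a : ℝ → ℂ} (ha : Continuous a) {g : ℝ → V}
    (hg : Continuous g) {y : ℝ → V} (hy : ∀ t, HasDerivAt y (a t • y t + g t) t) (s t : ℝ) :
    ∫ u in s..t, Complex.exp (∫ r in u..t, a r) • g u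
      = y t - Complex.exp (∫ r in s..t, a r) • y s := by
  set E : ℝ → ℂ := fun u => Complex.exp (∫ r in u..t, a r) with hE_def
  have hE u : HasDerivAt E (E u * -a u) u :=
    (intervalIntegral.integral_hasDerivAt_left (ha.intervalIntegrable _ _)
      (ha.stronglyMeasurableAtFilter _ _) ha.continuousAt).cexp
  have hEy u : HasDerivAt (fun u => E u • y u) (E u • g u) u :=
    ((hE u).smul (hy u)).congr_deriv <| by module
  have hEc : Continuous E :=
    Complex.continuous_exp.comp
      (continuous_intervalIntegral_left (fun _ _ => ha.intervalIntegrable _ _) t)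
  rw [intervalIntegral.integral_eq_sub_of_hasDerivAt (fun u _ => hEy u)
    ((hEc.smul hg).intervalIntegrable _ _)]
  simp [E]

theorem eq_boundedSolution {a : ℝ → ℂ} (ha : Continuous a) {K c : ℝ} (hstab : ExpStable a K c)
    (hc : 0 < c) {g : ℝ → V} (hg : Continuous g) {Cg : ℝ} (hCg : ∀ t, ‖g t‖ ≤ Cg) {y : ℝ → V}
    (hy : ∀ t, HasDerivAt y (a t • y t + g t) t) {Cy : ℝ} (hCy : ∀ t, ‖y t‖ ≤ Cy) :
    y = boundedSolution a g := by
  funext t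
  have hint : IntegrableOn (fun u => Complex.exp (∫ r in u..t, a r) • g u) (Iic t) := by
    refine (integrableOn_exp_sub_mul_Iic hc K Cg t).mono'
      ((Complex.continuous_exp.comp (continuous_intervalIntegral_left
        (fun _ _ => ha.intervalIntegrable _ _) t)).smul hg).aestronglyMeasurable.restrict ?_
    rw [ae_restrict_iff' measurableSet_Iic]
    exact ae_of_all _ fun u hu =>
      hstab.norm_cexp_integral_smul_le (ha.intervalIntegrable _ _) hu (hCg u)
  have hdecay : Tendsto (fun s => Real.exp (K - c * (t - s)) * Cy) atBot (𝓝 0) := by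
    have harg : Tendsto (fun s => K - c * (t - s)) atBot atBot :=
      (tendsto_atBot_add_const_left _ (K - c * t) (tendsto_id.const_mul_atBot hc)).congr
        fun s => by rw [id]; ring
    simpa using (Real.tendsto_exp_atBot.comp harg).mul_const Cy
  have hboundary : Tendsto (fun s => Complex.exp (∫ r in s..t, a r) • y s) atBot (𝓝 0) := by
    refine squeeze_zero_norm' ?_ hdecay
    filter_upwards [eventually_le_atBot t] with s hs using
      hstab.norm_cexp_integral_smul_le (ha.intervalIntegrable _ _) hs (hCy s)
  have hlim := intervalIntegral_tendsto_integral_Iic t hint tendsto_id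
  simp only [integral_cexp_integral_smul_eq ha hg hy _ t] at hlim
  exact tendsto_nhds_unique (by simpa using tendsto_const_nhds.sub hboundary) hlim

end BoundedSolution

section Scalar

variable {V : Type*} [NormedAddCommGroup V] [NormedSpace ℂ V]

theorem almostAutomorphic_boundedSolution {a : ℝ → ℂ} (ha : AlmostAutomorphic a) {Ca : ℝ}
    (hCa : ∀ t, ‖a t‖ ≤ Ca) {K c : ℝ} (hstab : ExpStable a K c) (hc : 0 < c) {g : ℝ → V}
    (hg : AlmostAutomorphic g) {Cg : ℝ} (hCg : ∀ t, ‖g t‖ ≤ Cg)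
    (hcont : Continuous (boundedSolution a g)) : AlmostAutomorphic (boundedSolution a g) := by
  refine ⟨hcont, fun σ => ?_⟩
  obtain ⟨k, hk, ⟨a', ha₁, ha₂⟩, ⟨g', hg₁, hg₂⟩⟩ := ha.exists_hasAutomorphicLimit_pair hg σ
  have ha_shift n : Continuous fun s => a (s + (σ ∘ k) n) := ha.1.comp (continuous_add_const _)
  have hg_shift n : Continuous fun s => g (s + (σ ∘ k) n) := hg.1.comp (continuous_add_const _)
  have ha'_meas : StronglyMeasurable a' := stronglyMeasurable_of_tendsto _
    (fun n => (ha_shift n).stronglyMeasurable) (tendsto_pi_nhds.2 ha₁)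
  have hg'_meas : StronglyMeasurable g' := stronglyMeasurable_of_tendsto _
    (fun n => (hg_shift n).stronglyMeasurable) (tendsto_pi_nhds.2 hg₁)
  have hCa' s : ‖a' s‖ ≤ Ca := le_of_tendsto' (ha₁ s).norm fun n => hCa _
  have hCg' s : ‖g' s‖ ≤ Cg := le_of_tendsto' (hg₁ s).norm fun n => hCg _
  have hstab' : ExpStable a' K c := ExpStable.of_tendsto
    (fun n => (ha_shift n).aestronglyMeasurable) (fun n s => hCa _)
    (fun n => hstab.comp_add_const _) ha₁
  refine ⟨k, hk, boundedSolution a' g', fun t => ?_, fun t => ?_⟩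
  · exact tendsto_boundedSolution_add ha.1.stronglyMeasurable hCa hstab hc
      hg.1.stronglyMeasurable hCg ha₁ hg₁ t
  · simp_rw [sub_eq_add_neg] at ha₂ hg₂ ⊢
    exact tendsto_boundedSolution_add (τ := fun n => -(σ ∘ k) n) ha'_meas hCa' hstab' hc
      hg'_meas hCg' ha₂ hg₂ t

variable [CompleteSpace V]

namespace AlmostAutomorphic

theorem of_hasDerivAt_of_neg {a : ℝ → ℂ} (ha : AlmostAutomorphic a) {Ca : ℝ}
    (hCa : ∀ t, ‖a t‖ ≤ Ca) {m : ℝ} (herg : ErgodicMeanR (fun t => (a t).re) m) (hm : m < 0)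
    {g : ℝ → V} (hg : AlmostAutomorphic g) {Cg : ℝ} (hCg : ∀ t, ‖g t‖ ≤ Cg) {y : ℝ → V}
    (hy : ∀ t, HasDerivAt y (a t • y t + g t) t) {Cy : ℝ} (hCy : ∀ t, ‖y t‖ ≤ Cy) :
    AlmostAutomorphic y := by
  obtain ⟨K, hstab⟩ := herg.exists_expStable hCa hm
  have hc : 0 < -m / 2 := by linarith
  have hycont : Continuous y := continuous_iff_continuousAt.2 fun t => (hy t).continuousAt
  rw [eq_boundedSolution ha.1 hstab hc hg.1 hCg hy hCy] at hycont ⊢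
  exact almostAutomorphic_boundedSolution ha hCa hstab hc hg hCg hycont

theorem of_hasDerivAt {a : ℝ → ℂ} (ha : AlmostAutomorphic a) {Ca : ℝ}
    (hCa : ∀ t, ‖a t‖ ≤ Ca) {m : ℝ} (herg : ErgodicMeanR (fun t => (a t).re) m) (hm : m ≠ 0)
    {g : ℝ → V} (hg : AlmostAutomorphic g) {Cg : ℝ} (hCg : ∀ t, ‖g t‖ ≤ Cg) {y : ℝ → V}
    (hy : ∀ t, HasDerivAt y (a t • y t + g t) t) {Cy : ℝ} (hCy : ∀ t, ‖y t‖ ≤ Cy) :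
    AlmostAutomorphic y := by
  rcases hm.lt_or_gt with hm | hm
  · exact of_hasDerivAt_of_neg ha hCa herg hm hg hCg hy hCy
  · have hy' t : HasDerivAt (fun s => y (-s)) (-a (-t) • y (-t) + -g (-t)) t :=
      ((hy (-t)).scomp t (hasDerivAt_neg t)).congr_deriv <| by module
    have hrev := of_hasDerivAt_of_neg ha.comp_neg.neg (fun t => by simpa using hCa (-t))
      (by simpa using herg.neg_comp_neg) (by linarith) hg.comp_neg.neg
      (fun t => by simpa using hCg (-t)) hy' fun t => hCy (-t)
    simpa using hrev.comp_neg

end AlmostAutomorphic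

end Scalar

theorem Matrix.sum_norm_apply_le_linfty_opNorm {ι κ α : Type*} [Fintype ι] [Fintype κ]
    [NormedAddCommGroup α] (A : Matrix ι κ α) (i : ι) (s : Finset κ) :
    ∑ j ∈ s, ‖A i j‖ ≤ ‖A‖ :=
  calc ∑ j ∈ s, ‖A i j‖ ≤ ∑ j, ‖A i j‖ :=
        Finset.sum_le_univ_sum_of_nonneg fun _ => norm_nonneg _
    _ ≤ ‖A‖ := by
      rw [Matrix.linfty_opNorm_def]
      have h := NNReal.coe_le_coe.2
        (Finset.le_sup (f := fun i => ∑ j, ‖A i j‖₊) (Finset.mem_univ i))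
      simpa only [NNReal.coe_sum, coe_nnnorm] using h

theorem Matrix.norm_sum_smul_le {ι κ V : Type*} [Fintype ι] [Fintype κ] [NormedAddCommGroup V]
    [NormedSpace ℂ V] (A : Matrix ι κ ℂ) (i : ι) (s : Finset κ) (x : κ → V) :
    ‖∑ j ∈ s, A i j • x j‖ ≤ ‖A‖ * ‖x‖ :=
  calc ‖∑ j ∈ s, A i j • x j‖ ≤ ∑ j ∈ s, ‖A i j‖ * ‖x‖ := norm_sum_le_of_le s fun j _ =>
        (norm_smul_le _ _).trans (mul_le_mul_of_nonneg_left (norm_le_pi_norm x j) (norm_nonneg _))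
    _ = (∑ j ∈ s, ‖A i j‖) * ‖x‖ := (Finset.sum_mul ..).symm
    _ ≤ ‖A‖ * ‖x‖ :=
        mul_le_mul_of_nonneg_right (A.sum_norm_apply_le_linfty_opNorm i s) (norm_nonneg _)

theorem sum_eq_add_sum_Ioi_of_forall_lt {ι M : Type*} [LinearOrder ι] [Fintype ι]
    [LocallyFiniteOrderTop ι] [AddCommMonoid M] {f : ι → M} (i : ι) (hf : ∀ j < i, f j = 0) :
    ∑ j, f j = f i + ∑ j ∈ Finset.Ioi i, f j := by
  rw [Finset.add_sum_Ioi_eq_sum_Ici]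
  exact (Finset.sum_subset (Finset.subset_univ _) fun j _ hj => hf j (by simpa using hj)).symm

theorem massera_triangular_system_ergodic_diagonal_general
    {V : Type*} [NormedAddCommGroup V] [NormedSpace ℂ V] [CompleteSpace V] {p : ℕ}
    (A : ℝ → Matrix (Fin p) (Fin p) ℂ)
    (hAb : ∃ C, ∀ t, ‖A t‖ ≤ C)
    (hAaa : ∀ i j : Fin p, AlmostAutomorphic (fun t => A t i j))
    (htri : ∀ (t : ℝ) (i j : Fin p), j < i → A t i j = 0)
    (hdiag : ∀ i : Fin p, ∃ m : ℝ, m ≠ 0 ∧ ErgodicMeanR (fun t => (A t i i).re) m)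
    (f : ℝ → (Fin p → V)) (hfb : ∃ C, ∀ t, ‖f t‖ ≤ C)
    (hfaa : AlmostAutomorphic f)
    (y : ℝ → (Fin p → V))
    (hy : ∀ (t : ℝ) (i : Fin p),
      HasDerivAt (fun t => y t i) ((∑ j : Fin p, A t i j • y t j) + f t i) t)
    (hyb : ∃ C, ∀ t : ℝ, ‖y t‖ ≤ C) :
    AlmostAutomorphic y := by
  obtain ⟨CA, hCA⟩ := hAb
  obtain ⟨Cf, hCf⟩ := hfb
  obtain ⟨Cy, hCy⟩ := hyb
  refine AlmostAutomorphic.pi fun i => ?_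
  induction i using WellFoundedGT.induction with
  | _ i ih =>
  obtain ⟨m, hm, herg⟩ := hdiag i
  have hrow t : HasDerivAt (fun t => y t i)
      (A t i i • y t i + (∑ j ∈ Finset.Ioi i, A t i j • y t j + f t i)) t := by
    simpa only [sum_eq_add_sum_Ioi_of_forall_lt (f := fun j => A t i j • y t j) i
      fun j hj => by rw [htri t i j hj, zero_smul], add_assoc] using hy t i
  have hg_aa : AlmostAutomorphic fun t => ∑ j ∈ Finset.Ioi i, A t i j • y t j + f t i :=
    (AlmostAutomorphic.finset_sum _ fun j hj => (hAaa i j).smul (ih j (Finset.mem_Ioi.1 hj))).add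
      (hfaa.apply i)
  have hg_bound t : ‖∑ j ∈ Finset.Ioi i, A t i j • y t j + f t i‖ ≤ CA * Cy + Cf :=
    norm_add_le_of_le ((Matrix.norm_sum_smul_le _ _ _ _).trans
      (mul_le_mul (hCA t) (hCy t) (norm_nonneg _) ((norm_nonneg _).trans (hCA t))))
      ((norm_le_pi_norm (f t) i).trans (hCf t))
  have hA_bound t : ‖A t i i‖ ≤ CA := by
    simpa using ((A t).sum_norm_apply_le_linfty_opNorm i {i}).trans (hCA t)
  exact AlmostAutomorphic.of_hasDerivAt (hAaa i i) hA_bound herg hm hg_aa hg_bound hrow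
    fun t => (norm_le_pi_norm (y t) i).trans (hCy t)

theorem massera_triangular_system_ergodic_diagonal
    {V : Type*} [NormedAddCommGroup V] [NormedSpace ℂ V] [CompleteSpace V] {p : ℕ}
    (A : ℝ → Matrix (Fin p) (Fin p) ℂ)
    (hAc : Continuous A) (hAb : ∃ C, ∀ t, ‖A t‖ ≤ C)
    (hAaa : ∀ i j : Fin p, AlmostAutomorphic (fun t => A t i j))
    (htri : ∀ (t : ℝ) (i j : Fin p), j < i → A t i j = 0)
    (hdiag : ∀ i : Fin p, ∃ m : ℝ, m ≠ 0 ∧ ErgodicMeanR (fun t => (A t i i).re) m)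
    (f : ℝ → (Fin p → V)) (hfc : Continuous f) (hfb : ∃ C, ∀ t, ‖f t‖ ≤ C)
    (hfaa : AlmostAutomorphic f)
    (y : ℝ → (Fin p → V))
    (hy : ∀ (t : ℝ) (i : Fin p),
      HasDerivAt (fun t => y t i) ((∑ j : Fin p, A t i j • y t j) + f t i) t)
    (hyb : ∃ C, ∀ t : ℝ, ‖y t‖ ≤ C) :
    AlmostAutomorphic y :=
  massera_triangular_system_ergodic_diagonal_general A hAb hAaa htri hdiag f hfb hfaa y hy hyb
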